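/- Let A_1, ..., A_N ∈ ℝ^{n×n}, let i ≥ 1, and let 𝒫_i ∈ ℝ^{ñ_i×ñ_i} be symmetric positive definite with 𝒫_i Ãⁱ(A_j) + Ãⁱ(A_j)ᵀ 𝒫_i ≼ 0 for all j = 1, ..., N. Let A : [0,∞) → ℝ^{n×n} take values in the convex hull of {A_1, ..., A_N}, let z : [0,∞) → ℝⁿ be differentiable with z'(t) = A(t) z(t) and z(0) = b, and set h(t) = cᵀ z(t) for a fixed c ∈ ℝⁿ. Let b̃_i = (b, ⊗²b, ..., ⊗ⁱb) and c̃_i = (c, ⊗²c, ..., ⊗ⁱc) in ℝ^{ñ_i}. Then for all t ≥ 0, |h(t) + h(t)² + ... + h(t)ⁱ| ≤ √(c̃_iᵀ 𝒫_i⁻¹ c̃_i) · √(b̃_iᵀ 𝒫_i b̃_i). -/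

import Mathlib

open Matrix

noncomputable section

/-- `M ≼ 0` for a (symmetric) matrix: `ξᵀ M ξ ≤ 0` for all `ξ`. -/
def NegSemidef {m : Type*} [Fintype m] (M : Matrix m m ℝ) : Prop :=
  ∀ x : m → ℝ, x ⬝ᵥ M *ᵥ x ≤ 0

/-- Index type for Kronecker powers: `kronIdx n k` indexes the `(k+1)`-st Kronecker power
of an `n`-dimensional object. -/
def kronIdx (n : ℕ) : ℕ → Type
  | 0 => Fin n
  | k+1 => Fin n × kronIdx n k

instance kronIdxFintype (n : ℕ) : ∀ k, Fintype (kronIdx n k)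
  | 0 => inferInstanceAs (Fintype (Fin n))
  | k+1 => @instFintypeProd _ _ _ (kronIdxFintype n k)

instance kronIdxDecEq (n : ℕ) : ∀ k, DecidableEq (kronIdx n k)
  | 0 => inferInstanceAs (DecidableEq (Fin n))
  | k+1 => @instDecidableEqProd _ _ _ (kronIdxDecEq n k)

/-- `matKronPow M k = ⊗^{k+1} M`, the `(k+1)`-st Kronecker power of the matrix `M`
(so `matKronPow M 0 = ⊗¹M = M`). -/
def matKronPow {n : ℕ} (M : Matrix (Fin n) (Fin n) ℝ) : ∀ k, Matrix (kronIdx n k) (kronIdx n k) ℝ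
  | 0 => M
  | k+1 => Matrix.kroneckerMap (· * ·) M (matKronPow M k)

/-- Kronecker product of two vectors. -/
def vecKron {α β : Type*} (u : α → ℝ) (v : β → ℝ) : α × β → ℝ := fun p => u p.1 * v p.2

/-- `vecKronPow x k = ⊗^{k+1} x`, the `(k+1)`-st Kronecker power of the vector `x`. -/
def vecKronPow {n : ℕ} (x : Fin n → ℝ) : ∀ k, kronIdx n k → ℝ
  | 0 => x
  | k+1 => vecKron x (vecKronPow x k)

/-- The lifted matrices: `liftA A k = 𝒜^{k+1}(A)`, with `𝒜¹(A) = A` and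
`𝒜^{k+1}(A) = Iₙ ⊗ 𝒜^k(A) + A ⊗ I_{n^k}`. -/
def liftA {n : ℕ} (A : Matrix (Fin n) (Fin n) ℝ) : ∀ k, Matrix (kronIdx n k) (kronIdx n k) ℝ
  | 0 => A
  | k+1 => Matrix.kroneckerMap (· * ·) (1 : Matrix (Fin n) (Fin n) ℝ) (liftA A k)
      + Matrix.kroneckerMap (· * ·) A (1 : Matrix (kronIdx n k) (kronIdx n k) ℝ)

/-- Index type of the stacked hierarchy system of degree `i`: blocks `k = 0, …, i-1`
corresponding to Kronecker powers `1, …, i`; its cardinality is `ñ_i = n + n² + ⋯ + nⁱ`. -/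
abbrev tildeIdx (n i : ℕ) : Type := Σ k : Fin i, kronIdx n k

/-- `Ãⁱ(A) = diag(𝒜¹(A), 𝒜²(A), …, 𝒜ⁱ(A))`. -/
def tildeA {n : ℕ} (A : Matrix (Fin n) (Fin n) ℝ) (i : ℕ) :
    Matrix (tildeIdx n i) (tildeIdx n i) ℝ :=
  Matrix.blockDiagonal' (fun k : Fin i => liftA A k)

/-- `diag(P, ⊗²P, …, ⊗ⁱP)`. -/
def tildeKronPow {n : ℕ} (P : Matrix (Fin n) (Fin n) ℝ) (i : ℕ) :
    Matrix (tildeIdx n i) (tildeIdx n i) ℝ :=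
  Matrix.blockDiagonal' (fun k : Fin i => matKronPow P k)

/-- `ξ̃_i(x) = (x, ⊗²x, …, ⊗ⁱx)`, the stacked vector of Kronecker powers of `x`. -/
def tildeXi {n : ℕ} (i : ℕ) (x : Fin n → ℝ) : tildeIdx n i → ℝ :=
  fun p => vecKronPow x p.1 p.2

open Kronecker

-- helper 1: kronecker mulVec
lemma kron_mulVec {m₁ m₂ : Type*} [Fintype m₁] [Fintype m₂]
    (M : Matrix m₁ m₁ ℝ) (Nn : Matrix m₂ m₂ ℝ) (u : m₁ → ℝ) (v : m₂ → ℝ) :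
    (Matrix.kroneckerMap (· * ·) M Nn) *ᵥ vecKron u v = vecKron (M *ᵥ u) (Nn *ᵥ v) := by
  ext ⟨p, q⟩
  simp only [Matrix.mulVec, Matrix.kroneckerMap, vecKron, dotProduct, Fintype.sum_prod_type,
    Matrix.of_apply]
  rw [Finset.sum_mul_sum]
  apply Finset.sum_congr rfl; intro a _
  apply Finset.sum_congr rfl; intro b _
  ring

lemma dot_kron {m₁ m₂ : Type*} [Fintype m₁] [Fintype m₂]
    (u u' : m₁ → ℝ) (v v' : m₂ → ℝ) :
    vecKron u v ⬝ᵥ vecKron u' v' = (u ⬝ᵥ u') * (v ⬝ᵥ v') := by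
  simp only [vecKron, dotProduct, Fintype.sum_prod_type]
  rw [Finset.sum_mul_sum]
  apply Finset.sum_congr rfl; intro a _
  apply Finset.sum_congr rfl; intro b _
  ring

lemma vecKronPow_dot {n : ℕ} (c x : Fin n → ℝ) :
    ∀ k, vecKronPow c k ⬝ᵥ vecKronPow x k = (c ⬝ᵥ x) ^ (k + 1)
  | 0 => by simp [vecKronPow]; rfl
  | k+1 => by
    rw [vecKronPow, vecKronPow]
    exact (dot_kron (m₁ := Fin n) (m₂ := kronIdx n k) c x (vecKronPow c k) (vecKronPow x k)).trans
      (by rw [vecKronPow_dot c x k]; ring)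

lemma tildeXi_dot {n : ℕ} (i : ℕ) (c x : Fin n → ℝ) :
    tildeXi i c ⬝ᵥ tildeXi i x = ∑ k ∈ Finset.Icc 1 i, (c ⬝ᵥ x) ^ k := by
  rw [show (tildeXi i c ⬝ᵥ tildeXi i x) = ∑ k : Fin i, (vecKronPow c k ⬝ᵥ vecKronPow x k) by
    simp only [dotProduct, tildeXi]
    rw [← Finset.univ_sigma_univ, Finset.sum_sigma]]
  simp only [vecKronPow_dot]
  rw [Fin.sum_univ_eq_sum_range (fun k => (c ⬝ᵥ x) ^ (k+1)), ← Finset.Ico_add_one_right_eq_Icc,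
    Finset.sum_Ico_eq_sum_range]
  simp [add_comm]

-- blockDiagonal' mulVec entry
lemma blockDiagonal'_mulVec_apply {ι : Type*} [Fintype ι] [DecidableEq ι]
    {m' : ι → Type*} [∀ i, Fintype (m' i)] [∀ i, DecidableEq (m' i)]
    (M : ∀ i, Matrix (m' i) (m' i) ℝ) (v : (Σ i, m' i) → ℝ) (k : ι) (p : m' k) :
    (Matrix.blockDiagonal' M *ᵥ v) ⟨k, p⟩ = (M k *ᵥ fun q => v ⟨k, q⟩) p := by
  simp only [Matrix.mulVec, dotProduct]
  rw [← Finset.univ_sigma_univ, Finset.sum_sigma]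
  rw [Finset.sum_eq_single k]
  · apply Finset.sum_congr rfl; intro q _
    rw [Matrix.blockDiagonal'_apply_eq]
  · intro k' _ hk'
    apply Finset.sum_eq_zero; intro q _
    rw [Matrix.blockDiagonal'_apply_ne _ _ _ (Ne.symm hk'), zero_mul]
  · intro h; exact absurd (Finset.mem_univ k) h

-- liftA linearity
lemma liftA_comb {n : ℕ} (A B : Matrix (Fin n) (Fin n) ℝ) (a b : ℝ) :
    ∀ k, liftA (a • A + b • B) k = a • liftA A k + b • liftA B k
  | 0 => rfl
  | k+1 => by
    show Matrix.kroneckerMap (· * ·) 1 (liftA (a • A + b • B) k)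
        + Matrix.kroneckerMap (· * ·) (a • A + b • B) 1 = _
    rw [liftA_comb A B a b k]
    show ((1 : Matrix (Fin n) (Fin n) ℝ) ⊗ₖ (a • liftA A k + b • liftA B k)
        + (a • A + b • B) ⊗ₖ (1 : Matrix (kronIdx n k) (kronIdx n k) ℝ) : Matrix (Fin n × kronIdx n k) (Fin n × kronIdx n k) ℝ) = _
    rw [Matrix.kronecker_add, Matrix.add_kronecker, Matrix.kronecker_smul, Matrix.kronecker_smul,
      Matrix.smul_kronecker, Matrix.smul_kronecker]
    show @Eq (Matrix (Fin n × kronIdx n k) (Fin n × kronIdx n k) ℝ) _ (a • ((1 : Matrix (Fin n) (Fin n) ℝ) ⊗ₖ liftA A k + A ⊗ₖ 1)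
        + b • ((1 : Matrix (Fin n) (Fin n) ℝ) ⊗ₖ liftA B k + B ⊗ₖ 1))
    erw [smul_add, smul_add]
    exact add_add_add_comm _ _ _ _

lemma tildeA_comb {n : ℕ} (A B : Matrix (Fin n) (Fin n) ℝ) (a b : ℝ) (i : ℕ) :
    tildeA (a • A + b • B) i = a • tildeA A i + b • tildeA B i := by
  unfold tildeA
  ext ⟨k, p⟩ ⟨k', q⟩
  by_cases h : k = k'
  · subst h
    simp [Matrix.blockDiagonal'_apply_eq, liftA_comb]
  · simp [Matrix.blockDiagonal'_apply_ne _ _ _ h]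

-- derivative helpers
lemma hasDerivAt_mulVec {m : Type*} [Fintype m] (M : Matrix m m ℝ)
    {f : ℝ → m → ℝ} {f' : m → ℝ} {t : ℝ} (hf : HasDerivAt f f' t) :
    HasDerivAt (fun s => M *ᵥ f s) (M *ᵥ f') t := by
  rw [hasDerivAt_pi] at hf ⊢
  intro p
  simp only [Matrix.mulVec, dotProduct]
  exact HasDerivAt.fun_sum fun q _ => (hf q).const_mul (M p q)

lemma HasDerivAt.dotProd {m : Type*} [Fintype m]
    {f g : ℝ → m → ℝ} {f' g' : m → ℝ} {t : ℝ}
    (hf : HasDerivAt f f' t) (hg : HasDerivAt g g' t) :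
    HasDerivAt (fun s => f s ⬝ᵥ g s) (f' ⬝ᵥ g t + f t ⬝ᵥ g') t := by
  simp only [dotProduct]
  rw [← Finset.sum_add_distrib]
  exact HasDerivAt.fun_sum fun q _ =>
    ((hasDerivAt_pi.1 hf q).mul (hasDerivAt_pi.1 hg q))

lemma hasDerivAt_vecKronPow {n : ℕ} {z : ℝ → Fin n → ℝ} {M : Matrix (Fin n) (Fin n) ℝ} {t : ℝ}
    (hz : HasDerivAt z (M *ᵥ z t) t) :
    ∀ k, HasDerivAt (fun s => vecKronPow (z s) k) (liftA M k *ᵥ vecKronPow (z t) k) t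
  | 0 => hz
  | k+1 => by
    have IH := hasDerivAt_vecKronPow hz k
    have key : liftA M (k+1) *ᵥ vecKronPow (z t) (k+1)
        = vecKron (z t) (liftA M k *ᵥ vecKronPow (z t) k)
          + vecKron (M *ᵥ z t) (vecKronPow (z t) k) := by
      show ((Matrix.kroneckerMap (· * ·) 1 (liftA M k)
          + Matrix.kroneckerMap (· * ·) M 1 : Matrix (Fin n × kronIdx n k) (Fin n × kronIdx n k) ℝ)) *ᵥ vecKron (z t) (vecKronPow (z t) k) = _
      rw [Matrix.add_mulVec, kron_mulVec, kron_mulVec, Matrix.one_mulVec, Matrix.one_mulVec]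
    rw [show (fun s => vecKronPow (z s) (k+1))
        = fun s => vecKron (z s) (vecKronPow (z s) k) from rfl, key]
    refine hasDerivAt_pi.2 ?_
    rintro ⟨p, q⟩
    have h1 := hasDerivAt_pi.1 hz p
    have h2 := hasDerivAt_pi.1 IH q
    have := h1.fun_mul h2
    simp only [vecKron, Pi.add_apply]
    exact this.congr_deriv (by ring)

lemma hasDerivAt_tildeXi {n : ℕ} {z : ℝ → Fin n → ℝ} {M : Matrix (Fin n) (Fin n) ℝ} {t : ℝ}
    (hz : HasDerivAt z (M *ᵥ z t) t) (i : ℕ) :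
    HasDerivAt (fun s => tildeXi i (z s)) (tildeA M i *ᵥ tildeXi i (z t)) t := by
  rw [hasDerivAt_pi]
  rintro ⟨k, p⟩
  have := hasDerivAt_pi.1 (hasDerivAt_vecKronPow hz k) p
  convert this using 1
  · rfl
  exact blockDiagonal'_mulVec_apply (fun k : Fin i => liftA M k) (tildeXi i (z t)) k p

-- Cauchy-Schwarz via discriminant
lemma cs_posdef {m : Type*} [Fintype m] [DecidableEq m]
    {P : Matrix m m ℝ} (hP : P.PosDef) (c v : m → ℝ) :
    |c ⬝ᵥ v| ≤ Real.sqrt (c ⬝ᵥ P⁻¹ *ᵥ c) * Real.sqrt (v ⬝ᵥ P *ᵥ v) := by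
  have hdet : IsUnit P.det := hP.det_pos.ne'.isUnit
  have hPsym : Pᵀ = P := hP.1
  have hPinv_sym : (P⁻¹)ᵀ = P⁻¹ := by rw [Matrix.transpose_nonsing_inv, hPsym]
  set w : m → ℝ := P⁻¹ *ᵥ c with hw
  have hPw : P *ᵥ w = c := by
    rw [hw, Matrix.mulVec_mulVec, Matrix.mul_nonsing_inv _ hdet, Matrix.one_mulVec]
  set α := v ⬝ᵥ P *ᵥ v with hα
  set β := c ⬝ᵥ v with hβ
  set γ := c ⬝ᵥ P⁻¹ *ᵥ c with hγ
  have hα0 : 0 ≤ α := by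
    have := hP.posSemidef.dotProduct_mulVec_nonneg v
    simpa using this
  have hγ0 : 0 ≤ γ := by
    have := (hP.inv).posSemidef.dotProduct_mulVec_nonneg c
    simpa using this
  have hwPw : w ⬝ᵥ P *ᵥ w = γ := by
    rw [hPw, hγ, hw, dotProduct_comm]
  have hvPw : v ⬝ᵥ P *ᵥ w = β := by
    rw [hPw, hβ, dotProduct_comm]
  have hwP : w ᵥ* P = c := by
    rw [← hPsym, Matrix.vecMul_transpose, hPw]
  have hwPv : w ⬝ᵥ P *ᵥ v = β := by
    rw [Matrix.dotProduct_mulVec, hwP, hβ]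
  have hquad : ∀ x : ℝ, 0 ≤ α * (x * x) + (2*β) * x + γ := by
    intro x
    have h0 := hP.posSemidef.dotProduct_mulVec_nonneg (x • v + w)
    have : (star (x • v + w)) ⬝ᵥ P *ᵥ (x • v + w)
        = α * (x*x) + (2*β)*x + γ := by
      simp only [star_trivial]
      rw [Matrix.mulVec_add, Matrix.mulVec_smul]
      simp only [dotProduct_add, add_dotProduct, dotProduct_smul, smul_dotProduct,
        smul_eq_mul]
      rw [hvPw, hwPv, hwPw, ← hα]
      ring
    rw [this] at h0
    exact h0
  have hdisc := discrim_le_zero hquad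
  rw [discrim] at hdisc
  have hβ2 : β ^ 2 ≤ γ * α := by nlinarith
  calc |β| = Real.sqrt (β ^ 2) := by rw [Real.sqrt_sq_eq_abs]
    _ ≤ Real.sqrt (γ * α) := Real.sqrt_le_sqrt hβ2
    _ = Real.sqrt γ * Real.sqrt α := Real.sqrt_mul hγ0 _

/-- with `𝒫_i` symmetric positive definite satisfying the lifted Lyapunov
inequalities, `z' = A(t)z`, `z(0) = b`, `h(t) = cᵀz(t)`, `b̃_i = ξ̃_i(b)`, `c̃_i = ξ̃_i(c)`:
`|h(t) + h(t)² + ⋯ + h(t)ⁱ| ≤ √(c̃_iᵀ 𝒫_i⁻¹ c̃_i) · √(b̃_iᵀ 𝒫_i b̃_i)` for all `t ≥ 0`. -/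
theorem stmt14 {n N : ℕ} (As : Fin N → Matrix (Fin n) (Fin n) ℝ) (i : ℕ) (hi : 1 ≤ i)
    (P : Matrix (tildeIdx n i) (tildeIdx n i) ℝ) (hP : P.PosDef)
    (hLyap : ∀ j, NegSemidef (P * tildeA (As j) i + (tildeA (As j) i)ᵀ * P))
    (A : ℝ → Matrix (Fin n) (Fin n) ℝ)
    (hA : ∀ t : ℝ, 0 ≤ t → A t ∈ convexHull ℝ (Set.range As))
    (z : ℝ → Fin n → ℝ) (b c : Fin n → ℝ)
    (hz : ∀ t : ℝ, 0 ≤ t → HasDerivAt z (A t *ᵥ z t) t) (hz0 : z 0 = b) :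
    ∀ t : ℝ, 0 ≤ t →
      |∑ k ∈ Finset.Icc 1 i, (c ⬝ᵥ z t) ^ k| ≤
        Real.sqrt (tildeXi i c ⬝ᵥ P⁻¹ *ᵥ tildeXi i c) *
          Real.sqrt (tildeXi i b ⬝ᵥ P *ᵥ tildeXi i b) := by
  have key : ∀ s : ℝ, 0 ≤ s →
      NegSemidef (P * tildeA (A s) i + (tildeA (A s) i)ᵀ * P) := by
    intro s hs
    have hsub : convexHull ℝ (Set.range As) ⊆
        {M | NegSemidef (P * tildeA M i + (tildeA M i)ᵀ * P)} := by
      apply convexHull_min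
      · rintro _ ⟨j, rfl⟩; exact hLyap j
      · intro X hX Y hY a b' ha hb hab
        simp only [Set.mem_setOf_eq] at hX hY ⊢
        intro x
        rw [tildeA_comb]
        have expand : P * (a • tildeA X i + b' • tildeA Y i)
              + (a • tildeA X i + b' • tildeA Y i)ᵀ * P
            = a • (P * tildeA X i + (tildeA X i)ᵀ * P)
              + b' • (P * tildeA Y i + (tildeA Y i)ᵀ * P) := by
          simp only [Matrix.mul_add, Matrix.add_mul, Matrix.transpose_add,
            Matrix.transpose_smul, Matrix.mul_smul, Matrix.smul_mul, smul_add]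
          abel
        rw [expand, Matrix.add_mulVec, Matrix.smul_mulVec, Matrix.smul_mulVec,
          dotProduct_add, dotProduct_smul, dotProduct_smul, smul_eq_mul, smul_eq_mul]
        have h1 := hX x
        have h2 := hY x
        nlinarith
    exact hsub (hA s hs)
  set ξ : ℝ → tildeIdx n i → ℝ := fun s => tildeXi i (z s) with hξdef
  set V : ℝ → ℝ := fun s => ξ s ⬝ᵥ P *ᵥ ξ s with hVdef
  have hξ : ∀ s : ℝ, 0 ≤ s → HasDerivAt ξ (tildeA (A s) i *ᵥ ξ s) s := fun s hs =>
    hasDerivAt_tildeXi (hz s hs) i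
  have hVd : ∀ s : ℝ, 0 ≤ s → HasDerivAt V
      (ξ s ⬝ᵥ ((P * tildeA (A s) i + (tildeA (A s) i)ᵀ * P) *ᵥ ξ s)) s := by
    intro s hs
    have h1 := (hξ s hs).dotProd (hasDerivAt_mulVec P (hξ s hs))
    convert h1 using 1
    rw [Matrix.add_mulVec, dotProduct_add, ← Matrix.mulVec_mulVec, ← Matrix.mulVec_mulVec,
      add_comm]
    congr 1
    rw [Matrix.dotProduct_mulVec (ξ s) (tildeA (A s) i)ᵀ, Matrix.vecMul_transpose]
  have hVanti : AntitoneOn V (Set.Ici (0:ℝ)) := by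
    apply antitoneOn_of_deriv_nonpos (convex_Ici 0)
    · intro s hs; exact (hVd s hs).continuousAt.continuousWithinAt
    · intro s hs; rw [interior_Ici] at hs
      exact (hVd s hs.le).differentiableAt.differentiableWithinAt
    · intro s hs; rw [interior_Ici] at hs
      rw [(hVd s hs.le).deriv]
      exact key s hs.le (ξ s)
  intro t ht
  have hVle : V t ≤ V 0 := hVanti Set.self_mem_Ici (Set.mem_Ici.2 ht) ht
  have hV0 : V 0 = tildeXi i b ⬝ᵥ P *ᵥ tildeXi i b := by
    simp only [hVdef, hξdef, hz0]
  have hCS := cs_posdef hP (tildeXi i c) (ξ t)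
  rw [← tildeXi_dot i c (z t)]
  refine hCS.trans ?_
  exact mul_le_mul_of_nonneg_left (Real.sqrt_le_sqrt (hV0 ▸ hVle)) (Real.sqrt_nonneg _)
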